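/- The Kreweras complement map Kr : NC(n) → NC(n) is a bijection. -/

import Mathlib

open scoped Classical


/-- Two blocks `B`, `C` cross: there are `i < k < p < q` with `i, p ∈ B` and `k, q ∈ C`. -/
def Crosses {n : ℕ} (B C : Finset (Fin n)) : Prop :=
  ∃ i k p q : Fin n, i < k ∧ k < p ∧ p < q ∧ i ∈ B ∧ p ∈ B ∧ k ∈ C ∧ q ∈ C

/-- `π` is a non-crossing linked partition of `{1, …, n}` (encoded as `Fin n`):
its (nonempty) blocks cover `Fin n`, are pairwise non-crossing, any two distinct blocks
intersect in at most one element, and if two distinct blocks intersect in `{j}` then both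
blocks have at least two elements and `j` is the minimal element of exactly one of them. -/
def IsNCL (n : ℕ) (π : Finset (Finset (Fin n))) : Prop :=
  (∀ B ∈ π, B.Nonempty) ∧
  (∀ x : Fin n, ∃ B ∈ π, x ∈ B) ∧
  (∀ B ∈ π, ∀ C ∈ π, B ≠ C → ¬ Crosses B C) ∧
  (∀ B ∈ π, ∀ C ∈ π, B ≠ C → (B ∩ C).card ≤ 1 ∧
    ∀ j : Fin n, B ∩ C = {j} →
      2 ≤ B.card ∧ 2 ≤ C.card ∧
        Xor' (B.min = (j : WithBot (Fin n))) (C.min = (j : WithBot (Fin n))))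

/-- `π` is a non-crossing partition: a non-crossing linked partition with pairwise
disjoint blocks. -/
def IsNC (n : ℕ) (π : Finset (Finset (Fin n))) : Prop :=
  IsNCL n π ∧ ∀ B ∈ π, ∀ C ∈ π, B ≠ C → Disjoint B C

/-- `Refines n σ π` (i.e. `σ ⪯ π`): every block of `π` is a union of blocks of `σ`. -/
def Refines (n : ℕ) (σ π : Finset (Finset (Fin n))) : Prop :=
  ∀ B ∈ π, ∃ S : Finset (Finset (Fin n)), S ⊆ σ ∧ B = S.sup id

/-- `a` and `b` lie in a common block of `π`. -/
def Linked {n : ℕ} (π : Finset (Finset (Fin n))) (a b : Fin n) : Prop :=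
  ∃ B ∈ π, a ∈ B ∧ b ∈ B

/-- `a` and `b` are connected in `π`: joined by a chain of pairwise intersecting blocks. -/
def Connected {n : ℕ} (π : Finset (Finset (Fin n))) (a b : Fin n) : Prop :=
  Relation.ReflTransGen (Linked π) a b

/-- The partition `c(π)` of `Fin n` into the connected components of `π`. -/
noncomputable def cPart (n : ℕ) (π : Finset (Finset (Fin n))) : Finset (Finset (Fin n)) :=
  Finset.univ.image fun i => Finset.univ.filter (Connected π i)

/-- Embedding of the unbarred copy: `i ↦ 2 i` in the interleaved order
`1, 1̄, 2, 2̄, …, n, n̄`. -/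
def ueEmb (n : ℕ) (i : Fin n) : Fin (2 * n) := ⟨2 * i.1, by have := i.isLt; omega⟩

/-- Embedding of the barred copy: `i ↦ 2 i + 1` in the interleaved order. -/
def beEmb (n : ℕ) (i : Fin n) : Fin (2 * n) := ⟨2 * i.1 + 1, by have := i.isLt; omega⟩

/-- The union `γ ∪ γ'` inside the interleaved ordered set `1, 1̄, 2, 2̄, …, n, n̄`. -/
def interleave (n : ℕ) (γ γ' : Finset (Finset (Fin n))) : Finset (Finset (Fin (2 * n))) :=
  γ.image (Finset.image (ueEmb n)) ∪ γ'.image (Finset.image (beEmb n))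

/-- `γ'` is the Kreweras complement of `γ`: the largest non-crossing partition (in the
refinement order) such that `γ ∪ γ'` is non-crossing in the interleaved order. -/
def IsKr (n : ℕ) (γ γ' : Finset (Finset (Fin n))) : Prop :=
  IsNC n γ' ∧ IsNC (2 * n) (interleave n γ γ') ∧
  ∀ τ, IsNC n τ → IsNC (2 * n) (interleave n γ τ) → Refines n τ γ'

/-- `B` is an exterior block of `γ`: no other block `D` of `γ` contains elements `l, s`
with `l = min B`, or `l < min B` and `max B < s`. -/
def IsExteriorIn (n : ℕ) (γ : Finset (Finset (Fin n))) (B : Finset (Fin n)) : Prop :=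
  B ∈ γ ∧ ∀ D ∈ γ, D ≠ B → ∀ l ∈ D, ∀ s ∈ D,
    ¬((l ∈ B ∧ ∀ b ∈ B, l ≤ b) ∨ (∀ b ∈ B, l < b ∧ b < s))

/-- Halving map `Fin (2n) → Fin n`. -/
def halfEmb (n : ℕ) (i : Fin (2 * n)) : Fin n := ⟨i.1 / 2, by have := i.isLt; omega⟩

/-- `γ₋`: the restriction of `γ ∈ NC(2n)` to the odd elements `{1, 3, …, 2n − 1}`
(indices `≡ 0 mod 2` in the `0`-based encoding), identified with a partition of `Fin n`. -/
noncomputable def minusPart (n : ℕ) (γ : Finset (Finset (Fin (2 * n)))) :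
    Finset (Finset (Fin n)) :=
  (γ.filter fun B => ∀ i ∈ B, i.1 % 2 = 0).image (Finset.image (halfEmb n))

/-- `γ₊`: the restriction of `γ ∈ NC(2n)` to the even elements `{2, 4, …, 2n}`,
identified with a partition of `Fin n`. -/
noncomputable def plusPart (n : ℕ) (γ : Finset (Finset (Fin (2 * n)))) :
    Finset (Finset (Fin n)) :=
  (γ.filter fun B => ∀ i ∈ B, i.1 % 2 = 1).image (Finset.image (halfEmb n))

/-- `γ ∈ NC_s(2n)`: a non-crossing partition of `{1, …, 2n}` all of whose blocks have
elements of constant parity, with `γ₊ = Kr(γ₋)`. -/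
def NCs (n : ℕ) (γ : Finset (Finset (Fin (2 * n)))) : Prop :=
  IsNC (2 * n) γ ∧
  (∀ B ∈ γ, (∀ i ∈ B, i.1 % 2 = 0) ∨ (∀ i ∈ B, i.1 % 2 = 1)) ∧
  IsKr n (minusPart n γ) (plusPart n γ)

/-- The restriction of `γ` to a subset `S`. -/
noncomputable def restrictTo (n : ℕ) (γ : Finset (Finset (Fin n))) (S : Finset (Fin n)) :
    Finset (Finset (Fin n)) :=
  (γ.image fun B => B ∩ S).filter Finset.Nonempty

/-- A planar rooted tree: a root together with a linearly ordered (left to right) list of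
subtrees. -/
inductive PTree where
  | node : List PTree → PTree

mutual
/-- Number of vertices of a planar rooted tree. -/
def PTree.size : PTree → ℕ
  | .node ts => 1 + sizeList ts
def sizeList : List PTree → ℕ
  | [] => 0
  | t :: ts => PTree.size t + sizeList ts
end

/-- Depth-first indices of the roots of a list of trees, the first root getting index `k`. -/
def childRoots : List PTree → ℕ → List ℕ
  | [], _ => []
  | t :: ts, k => k :: childRoots ts (k + PTree.size t)

mutual
/-- The blocks of the constituent elementary trees (a root together with its offsprings,
provided there is at least one offspring) of a planar tree, with vertices numbered in
depth-first (left-first) order starting at `k`. -/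
def PTree.blk : PTree → ℕ → List (List ℕ)
  | .node ts, k =>
      (if ts.isEmpty then [] else [k :: childRoots ts (k + 1)]) ++ blkList ts (k + 1)
def blkList : List PTree → ℕ → List (List ℕ)
  | [], _ => []
  | t :: ts, k => PTree.blk t k ++ blkList ts (k + PTree.size t)
end

/-- The blocks of the elementary trees constituting a planar tree, in depth-first
numbering starting at `0`; a single vertex is itself an elementary tree. -/
def treeBlocks : PTree → List (List ℕ)
  | .node [] => [[0]]
  | t => t.blk 0

/-- Convert a list of (`0`-based) vertex numbers into a block of `Fin n`. -/
def listToBlock (n : ℕ) (l : List ℕ) : Finset (Fin n) :=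
  (l.filterMap fun i => if h : i < n then some (⟨i, h⟩ : Fin n) else none).toFinset

mutual
/-- Evaluation of a planar rooted tree: the product over its vertices of `f k`, where `k`
is the number of offsprings of the vertex (so an elementary tree with `m` vertices
contributes `f (m − 1)`). -/
def PTree.eval (f : ℕ → ℂ) : PTree → ℂ
  | .node ts => f ts.length * evalList f ts
def evalList (f : ℕ → ℂ) : List PTree → ℂ
  | [] => 1
  | t :: ts => PTree.eval f t * evalList f ts
end

/-- A bicolor planar rooted tree: each subtree carries a color (`true` = color 1,
`false` = color 0). -/
inductive BTree where
  | node : List (Bool × BTree) → BTree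

mutual
/-- Number of vertices of a bicolor planar tree. -/
def BTree.size : BTree → ℕ
  | .node ts => 1 + bsizeList ts
def bsizeList : List (Bool × BTree) → ℕ
  | [] => 0
  | (_, t) :: ts => BTree.size t + bsizeList ts
end

mutual
/-- Validity of a bicolor planar tree: at every vertex, the offsprings of color 1 precede
the offsprings of color 0. -/
def BTree.Valid : BTree → Prop
  | .node ts => List.Chain' (fun a b => b ≤ a) (ts.map Prod.fst) ∧ bvalidList ts
def bvalidList : List (Bool × BTree) → Prop
  | [] => True
  | (_, t) :: ts => BTree.Valid t ∧ bvalidList ts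
end

/-- A bicolor tree is elementary when all offsprings of the root are leaves. -/
def BTree.IsElementary : BTree → Prop
  | .node ts => ∀ p ∈ ts, p.2 = BTree.node []
/-- The term `t_π[X_1, …, X_n]`: the product over blocks `B = (i_1 < … < i_l)` of `π` of
`t_{l−1}(X_{i_1}, …, X_{i_l})`, times the product over `k ∈ s(π)` (the elements that are
not the minimal element of any block) of `t_0(X_k)`. Here `t m` stands for `t_{m−1}`,
taking `m` arguments. -/
noncomputable def tTerm {A : Type*} [Ring A] (t : ∀ m : ℕ, (Fin m → A) → ℂ)
    (n : ℕ) (π : Finset (Finset (Fin n))) (X : Fin n → A) : ℂ :=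
  (∏ B ∈ π, t B.card fun j => X (B.orderIsoOfFin rfl j).1) *
  ∏ k ∈ Finset.univ.filter
      (fun k : Fin n => ∀ B ∈ π, B.min ≠ (k : WithBot (Fin n))),
    t 1 fun _ => X k

/-- The family `t` satisfies the defining recurrence of the `t`-coefficients:
`φ(X_1 ⋯ X_n) = Σ_{π ∈ NCL(n)} t_π[X_1, …, X_n]`. -/
def TRec {A : Type*} [Ring A] [Algebra ℂ A] (φ : A →ₗ[ℂ] ℂ)
    (t : ∀ m : ℕ, (Fin m → A) → ℂ) : Prop :=
  ∀ (n : ℕ) (X : Fin (n + 1) → A),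
    φ (List.ofFn X).prod =
      ∑ π ∈ Finset.univ.filter (fun π => IsNCL (n + 1) π), tTerm t (n + 1) π X

/-- The term `κ_γ[X_1, …, X_n]`: the product over blocks `B = (i_1 < … < i_l)` of `γ` of
`κ_l(X_{i_1}, …, X_{i_l})`. -/
noncomputable def cumTerm {A : Type*} [Ring A] (κ : ∀ m : ℕ, (Fin m → A) → ℂ)
    (n : ℕ) (γ : Finset (Finset (Fin n))) (X : Fin n → A) : ℂ :=
  ∏ B ∈ γ, κ B.card fun j => X (B.orderIsoOfFin rfl j).1

/-- The family `κ` satisfies the moment–cumulant recurrence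
`φ(X_1 ⋯ X_n) = Σ_{γ ∈ NC(n)} κ_γ[X_1, …, X_n]` defining the free cumulants. -/
def CumRec {A : Type*} [Ring A] [Algebra ℂ A] (φ : A →ₗ[ℂ] ℂ)
    (κ : ∀ m : ℕ, (Fin m → A) → ℂ) : Prop :=
  ∀ (n : ℕ) (X : Fin (n + 1) → A),
    φ (List.ofFn X).prod =
      ∑ γ ∈ Finset.univ.filter (fun γ => IsNC (n + 1) γ), cumTerm κ (n + 1) γ X

/-- Free independence of a family of unital subalgebras: alternating products of centered
elements have vanishing expectation. -/
def FreeFamily {A : Type*} [Ring A] [Algebra ℂ A] (φ : A →ₗ[ℂ] ℂ) {I : Type*}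
    (S : I → Subalgebra ℂ A) : Prop :=
  ∀ (n : ℕ) (a : Fin (n + 1) → A) (idx : Fin (n + 1) → I),
    (∀ k, a k ∈ S (idx k)) → (∀ k, φ (a k) = 0) →
    (∀ k : Fin n, idx k.castSucc ≠ idx k.succ) →
    φ (List.ofFn a).prod = 0

/-- Two elements are free if the unital subalgebras they generate are free. -/
def FreePair {A : Type*} [Ring A] [Algebra ℂ A] (φ : A →ₗ[ℂ] ℂ) (X Y : A) : Prop :=
  FreeFamily φ fun b : Bool =>
    if b = true then Algebra.adjoin ℂ {X} else Algebra.adjoin ℂ {Y}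


/-!
Kr(γ) is the partition into the classes of the relation `i ~ j` iff the interval `(i, j]` is a
union of blocks of `γ`: in the interleaved order the only elements of `γ`'s ground set between
`ī` and `j̄` are those of `(i, j]`, so a block of barred elements avoids crossing `γ` exactly when
all such intervals are unions of blocks of `γ`. This gives existence and maximality directly.
Conversely `γ` is recovered from Kr(γ): for `i < j`, the elements `i` and `j` share a block of `γ`
iff `[i, j)` is a union of blocks of Kr(γ), which follows by induction along the block of `j`.
So Kr is injective on the finite set NC(n), hence bijective.
-/

open Finset

variable {n : ℕ} {γ σ τ π : Finset (Finset (Fin n))}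

theorem Linked.symm {a b : Fin n} (h : Linked π a b) : Linked π b a :=
  let ⟨B, hB, ha, hb⟩ := h
  ⟨B, hB, hb, ha⟩

def IsSaturated (π : Finset (Finset (Fin n))) (s : Set (Fin n)) : Prop :=
  ∀ B ∈ π, ∀ x ∈ B, ∀ y ∈ B, x ∈ s → y ∈ s

namespace IsNC

theorem of_disjoint (h₁ : ∀ B ∈ π, B.Nonempty) (h₂ : ∀ x : Fin n, ∃ B ∈ π, x ∈ B)
    (h₃ : ∀ B ∈ π, ∀ C ∈ π, B ≠ C → ¬ Crosses B C)
    (h₄ : ∀ B ∈ π, ∀ C ∈ π, B ≠ C → Disjoint B C) : IsNC n π := by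
  refine ⟨⟨h₁, h₂, h₃, fun B hB C hC hne => ?_⟩, h₄⟩
  rw [disjoint_iff_inter_eq_empty.1 (h₄ B hB C hC hne)]
  exact ⟨by simp, fun j hj => absurd hj.symm (singleton_ne_empty j)⟩

variable (hπ : IsNC n π)
include hπ

theorem nonempty {B : Finset (Fin n)} (hB : B ∈ π) : B.Nonempty := hπ.1.1 B hB

theorem exists_mem (x : Fin n) : ∃ B ∈ π, x ∈ B := hπ.1.2.1 x

theorem not_crosses {B C : Finset (Fin n)} (hB : B ∈ π) (hC : C ∈ π) (hne : B ≠ C) :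
    ¬ Crosses B C :=
  hπ.1.2.2.1 B hB C hC hne

theorem eq_of_mem {B C : Finset (Fin n)} (hB : B ∈ π) (hC : C ∈ π) {x : Fin n} (hxB : x ∈ B)
    (hxC : x ∈ C) : B = C :=
  by_contra fun hne => disjoint_left.1 (hπ.2 B hB C hC hne) hxB hxC

theorem linked_iff {B : Finset (Fin n)} (hB : B ∈ π) {x y : Fin n} (hx : x ∈ B) :
    Linked π x y ↔ y ∈ B :=
  ⟨fun ⟨_, hC, hxC, hyC⟩ => hπ.eq_of_mem hB hC hx hxC ▸ hyC, fun hy => ⟨B, hB, hx, hy⟩⟩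

theorem subset_of_linked_iff (hσ : IsNC n σ) (h : ∀ i j, Linked π i j ↔ Linked σ i j) :
    π ⊆ σ := by
  intro B hB
  obtain ⟨x, hx⟩ := hπ.nonempty hB
  obtain ⟨C, hC, hxC⟩ := hσ.exists_mem x
  have hBC : B = C := by
    ext y
    rw [← hπ.linked_iff hB hx, h, hσ.linked_iff hC hxC]
  exact hBC ▸ hC

theorem ext_of_linked (hσ : IsNC n σ)
    (h : ∀ i j, i < j → (Linked π i j ↔ Linked σ i j)) : π = σ := by
  have hlinked : ∀ i j, Linked π i j ↔ Linked σ i j := by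
    intro i j
    rcases lt_trichotomy i j with hij | rfl | hij
    · exact h i j hij
    · obtain ⟨B, hB, hi⟩ := hπ.exists_mem i
      obtain ⟨C, hC, hi'⟩ := hσ.exists_mem i
      exact iff_of_true ⟨B, hB, hi, hi⟩ ⟨C, hC, hi', hi'⟩
    · exact ⟨fun hl => ((h j i hij).1 hl.symm).symm, fun hl => ((h j i hij).2 hl.symm).symm⟩
  exact (hπ.subset_of_linked_iff hσ hlinked).antisymm
    (hσ.subset_of_linked_iff hπ fun i j => (hlinked i j).symm)

theorem ne_of_mem {B D : Finset (Fin n)} (hB : B ∈ π) (hD : D ∈ π) (hne : B ≠ D) {a d : Fin n}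
    (ha : a ∈ B) (hd : d ∈ D) : a ≠ d :=
  fun had => hne (hπ.eq_of_mem hB hD ha (had ▸ hd))

theorem mem_Ioo_of_mem_Ioo {B D : Finset (Fin n)} (hB : B ∈ π) (hD : D ∈ π) (hne : B ≠ D)
    {a b d e : Fin n} (ha : a ∈ B) (hb : b ∈ B) (hd : d ∈ D) (he : e ∈ D) (had : a < d)
    (hdb : d < b) : e ∈ Set.Ioo a b := by
  refine ⟨lt_of_not_ge fun hea => ?_, lt_of_not_ge fun hbe => ?_⟩
  · have hea' : e < a := lt_of_le_of_ne hea (hπ.ne_of_mem hD hB hne.symm he ha)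
    exact hπ.not_crosses hD hB hne.symm ⟨e, a, d, b, hea', had, hdb, he, hd, ha, hb⟩
  · have hbe' : b < e := lt_of_le_of_ne hbe (hπ.ne_of_mem hB hD hne hb he)
    exact hπ.not_crosses hB hD hne ⟨a, d, b, e, had, hdb, hbe', ha, hb, hd, he⟩

theorem isSaturated_Ioo {B : Finset (Fin n)} (hB : B ∈ π) {a b : Fin n} (ha : a ∈ B)
    (hb : b ∈ B) (hgap : ∀ x ∈ B, x ≤ a ∨ b ≤ x) : IsSaturated π (Set.Ioo a b) := by
  intro D hD x hx y hy hxab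
  have hBD : B ≠ D := by
    rintro rfl
    rcases hgap x hx with h | h
    exacts [absurd hxab.1 h.not_gt, absurd hxab.2 h.not_gt]
  exact hπ.mem_Ioo_of_mem_Ioo hB hD hBD ha hb hx hy hxab.1 hxab.2

theorem isSaturated_Icc {B : Finset (Fin n)} (hB : B ∈ π) {a b : Fin n} (ha : a ∈ B)
    (hb : b ∈ B) (hsub : ∀ x ∈ B, x ∈ Set.Icc a b) : IsSaturated π (Set.Icc a b) := by
  intro D hD x hx y hy hxab
  by_cases hBD : B = D
  · exact hsub y (hBD ▸ hy)
  · have hax : a < x := lt_of_le_of_ne hxab.1 (hπ.ne_of_mem hB hD hBD ha hx)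
    have hxb : x < b := lt_of_le_of_ne hxab.2 (hπ.ne_of_mem hB hD hBD hb hx).symm
    exact Set.Ioo_subset_Icc_self (hπ.mem_Ioo_of_mem_Ioo hB hD hBD ha hb hx hy hax hxb)

end IsNC

theorem Refines.exists_subset (h : Refines n σ π) {B : Finset (Fin n)} (hB : B ∈ π) {x : Fin n}
    (hx : x ∈ B) : ∃ T ∈ σ, x ∈ T ∧ T ⊆ B := by
  obtain ⟨S, hS, rfl⟩ := h B hB
  obtain ⟨T, hT, hxT⟩ := mem_sup.1 hx
  exact ⟨T, hS hT, hxT, le_sup (f := id) hT⟩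

theorem IsNC.subset_of_refines (hπ : IsNC n π) (h₁ : Refines n σ π) (h₂ : Refines n π σ) :
    π ⊆ σ := by
  intro B hB
  obtain ⟨x, hx⟩ := hπ.nonempty hB
  obtain ⟨T, hT, hxT, hTB⟩ := h₁.exists_subset hB hx
  obtain ⟨B', hB', hxB', hB'T⟩ := h₂.exists_subset hT hxT
  obtain rfl := hπ.eq_of_mem hB hB' hx hxB'
  exact hTB.antisymm hB'T ▸ hT

theorem refines_antisymm (hσ : IsNC n σ) (hπ : IsNC n π) (h₁ : Refines n σ π)
    (h₂ : Refines n π σ) : σ = π :=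
  (hσ.subset_of_refines h₂ h₁).antisymm (hπ.subset_of_refines h₁ h₂)

theorem refines_of_isSaturated (hσ : ∀ x, ∃ T ∈ σ, x ∈ T) (h : ∀ B ∈ π, IsSaturated σ B) :
    Refines n σ π := by
  intro B hB
  refine ⟨σ.filter (· ⊆ B), filter_subset _ _, ?_⟩
  ext x
  simp only [mem_sup, mem_filter, id]
  constructor
  · intro hx
    obtain ⟨T, hT, hxT⟩ := hσ x
    exact ⟨T, ⟨hT, fun y hy => h B hB T hT x hxT y hy hx⟩, hxT⟩
  · rintro ⟨T, ⟨-, hTB⟩, hxT⟩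
    exact hTB hxT

noncomputable def classes (r : Fin n → Fin n → Prop) : Finset (Finset (Fin n)) :=
  univ.image fun i => univ.filter (r i)

section Classes

variable {r : Fin n → Fin n → Prop}

theorem mem_classes {C : Finset (Fin n)} : C ∈ classes r ↔ ∃ i, univ.filter (r i) = C := by
  simp [classes]

theorem linked_classes_iff (hr : Equivalence r) {x y : Fin n} :
    Linked (classes r) x y ↔ r x y := by
  constructor
  · rintro ⟨C, hC, hx, hy⟩
    obtain ⟨i, rfl⟩ := mem_classes.1 hC
    simp only [mem_filter, mem_univ, true_and] at hx hy
    exact hr.trans (hr.symm hx) hy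
  · intro h
    exact ⟨_, mem_classes.2 ⟨x, rfl⟩, by simpa using hr.refl x, by simpa using h⟩

theorem classes_eq_of_rel (hr : Equivalence r) {C D : Finset (Fin n)} (hC : C ∈ classes r)
    (hD : D ∈ classes r) {x y : Fin n} (hx : x ∈ C) (hy : y ∈ D) (hxy : r x y) : C = D := by
  obtain ⟨c, rfl⟩ := mem_classes.1 hC
  obtain ⟨d, rfl⟩ := mem_classes.1 hD
  simp only [mem_filter, mem_univ, true_and] at hx hy
  have hcd : r c d := hr.trans hx (hr.trans hxy (hr.symm hy))
  ext z
  simp only [mem_filter, mem_univ, true_and]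
  exact ⟨hr.trans (hr.symm hcd), hr.trans hcd⟩

theorem isNC_classes (hr : Equivalence r)
    (hnc : ∀ i k p q, i < k → k < p → p < q → r i p → r k q → r i k) : IsNC n (classes r) := by
  refine IsNC.of_disjoint (fun C hC => ?_) (fun x => ?_) (fun C hC D hD hne => ?_)
    (fun C hC D hD hne => ?_)
  · obtain ⟨i, rfl⟩ := mem_classes.1 hC
    exact ⟨i, by simpa using hr.refl i⟩
  · exact ⟨_, mem_classes.2 ⟨x, rfl⟩, by simpa using hr.refl x⟩
  · rintro ⟨i, k, p, q, hik, hkp, hpq, hi, hp, hk, hq⟩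
    have hip := (linked_classes_iff hr).1 ⟨C, hC, hi, hp⟩
    have hkq := (linked_classes_iff hr).1 ⟨D, hD, hk, hq⟩
    exact hne (classes_eq_of_rel hr hC hD hi hk (hnc i k p q hik hkp hpq hip hkq))
  · exact disjoint_left.2 fun x hxC hxD => hne (classes_eq_of_rel hr hC hD hxC hxD (hr.refl x))

end Classes

def KrRel (γ : Finset (Finset (Fin n))) (i j : Fin n) : Prop :=
  IsSaturated γ (Set.uIoc i j)

noncomputable def kr (γ : Finset (Finset (Fin n))) : Finset (Finset (Fin n)) :=
  classes (KrRel γ)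

theorem krRel_equivalence (γ : Finset (Finset (Fin n))) : Equivalence (KrRel γ) where
  refl i := by
    intro B _ x _ y _ hx
    simp only [Set.mem_uIoc] at hx
    omega
  symm h := by rwa [KrRel, Set.uIoc_comm]
  trans {i j k} hij hjk := by
    intro B hB x hx y hy hxik
    have h₁ := hij B hB x hx y hy
    have h₂ := hij B hB y hy x hx
    have h₃ := hjk B hB x hx y hy
    have h₄ := hjk B hB y hy x hx
    simp only [Set.mem_uIoc] at *
    omega

theorem KrRel.of_crosses {i k p q : Fin n} (hik : i < k) (hkp : k < p) (hpq : p < q)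
    (hip : KrRel γ i p) (hkq : KrRel γ k q) : KrRel γ i k := by
  intro B hB x hx y hy hxik
  have h₁ := hip B hB x hx y hy
  have h₂ := hkq B hB y hy x hx
  simp only [Set.mem_uIoc] at *
  omega

theorem isNC_kr : IsNC n (kr γ) :=
  isNC_classes (krRel_equivalence γ) fun _ _ _ _ => KrRel.of_crosses

theorem ueEmb_strictMono : StrictMono (ueEmb n) := fun a b h => by
  simp only [ueEmb, Fin.mk_lt_mk]
  omega

theorem beEmb_strictMono : StrictMono (beEmb n) := fun a b h => by
  simp only [beEmb, Fin.mk_lt_mk]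
  omega

theorem ueEmb_halfEmb_or_beEmb_halfEmb (z : Fin (2 * n)) :
    ueEmb n (halfEmb n z) = z ∨ beEmb n (halfEmb n z) = z := by
  simp only [ueEmb, beEmb, halfEmb, Fin.ext_iff]
  omega

theorem disjoint_image_ueEmb_beEmb (B C : Finset (Fin n)) :
    Disjoint (B.image (ueEmb n)) (C.image (beEmb n)) := by
  simp only [disjoint_left, mem_image, ueEmb, beEmb, not_exists, not_and, Fin.ext_iff]
  omega

theorem crosses_image_iff {m k : ℕ} (f g : Fin m → Fin k) {B C : Finset (Fin m)} :
    Crosses (B.image f) (C.image g) ↔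
      ∃ a ∈ B, ∃ c ∈ C, ∃ b ∈ B, ∃ d ∈ C, f a < g c ∧ g c < f b ∧ f b < g d := by
  simp only [Crosses, mem_image]
  constructor
  · rintro ⟨_, _, _, _, h₁, h₂, h₃, ⟨a, ha, rfl⟩, ⟨b, hb, rfl⟩, ⟨c, hc, rfl⟩, ⟨d, hd, rfl⟩⟩
    exact ⟨a, ha, c, hc, b, hb, d, hd, h₁, h₂, h₃⟩
  · rintro ⟨a, ha, c, hc, b, hb, d, hd, h₁, h₂, h₃⟩
    exact ⟨_, _, _, _, h₁, h₂, h₃, ⟨a, ha, rfl⟩, ⟨b, hb, rfl⟩, ⟨c, hc, rfl⟩, ⟨d, hd, rfl⟩⟩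

theorem crosses_image_iff_of_strictMono {m k : ℕ} {f : Fin m → Fin k} (hf : StrictMono f)
    {B C : Finset (Fin m)} : Crosses (B.image f) (C.image f) ↔ Crosses B C := by
  rw [crosses_image_iff]
  simp only [hf.lt_iff_lt, Crosses]
  constructor
  · rintro ⟨a, ha, c, hc, b, hb, d, hd, h⟩
    exact ⟨a, c, b, d, h.1, h.2.1, h.2.2, ha, hb, hc, hd⟩
  · rintro ⟨a, c, b, d, h₁, h₂, h₃, ha, hb, hc, hd⟩
    exact ⟨a, ha, c, hc, b, hb, d, hd, h₁, h₂, h₃⟩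

theorem not_crosses_ueEmb_beEmb_iff {B C : Finset (Fin n)} :
    (¬ Crosses (B.image (ueEmb n)) (C.image (beEmb n)) ∧
      ¬ Crosses (C.image (beEmb n)) (B.image (ueEmb n))) ↔
      ∀ i ∈ C, ∀ j ∈ C, ∀ x ∈ B, ∀ y ∈ B, x ∈ Set.uIoc i j → y ∈ Set.uIoc i j := by
  simp only [crosses_image_iff, ueEmb, beEmb, Fin.mk_lt_mk, Set.mem_uIoc]
  constructor
  · rintro ⟨h₁, h₂⟩ i hi j hj x hx y hy hxij
    by_contra hy'
    rcases hxij with hxij | hxij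
    · rcases le_or_gt y i with hyi | hyi
      · exact h₁ ⟨y, hy, i, hi, x, hx, j, hj, by omega⟩
      · exact h₂ ⟨i, hi, x, hx, j, hj, y, hy, by omega⟩
    · rcases le_or_gt y j with hyj | hyj
      · exact h₁ ⟨y, hy, j, hj, x, hx, i, hi, by omega⟩
      · exact h₂ ⟨j, hj, x, hx, i, hi, y, hy, by omega⟩
  · intro h
    constructor
    · rintro ⟨a, ha, c, hc, b, hb, d, hd, hcb⟩
      have := h c hc d hd b hb a ha
      omega
    · rintro ⟨c, hc, a, ha, d, hd, b, hb, hcb⟩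
      have := h c hc d hd a ha b hb
      omega

theorem isNC_interleave (hγ : IsNC n γ) (hσ : IsNC n σ)
    (h : ∀ C ∈ σ, ∀ i ∈ C, ∀ j ∈ C, KrRel γ i j) : IsNC (2 * n) (interleave n γ σ) := by
  have hmix : ∀ B ∈ γ, ∀ C ∈ σ, ¬ Crosses (B.image (ueEmb n)) (C.image (beEmb n)) ∧
      ¬ Crosses (C.image (beEmb n)) (B.image (ueEmb n)) := fun B hB C hC =>
    not_crosses_ueEmb_beEmb_iff.2 fun i hi j hj => h C hC i hi j hj B hB
  refine IsNC.of_disjoint ?_ (fun z => ?_) ?_ ?_ <;> simp only [interleave, mem_union, mem_image]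
  · rintro _ (⟨B, hB, rfl⟩ | ⟨C, hC, rfl⟩)
    exacts [(hγ.nonempty hB).image _, (hσ.nonempty hC).image _]
  · obtain ⟨B, hB, hzB⟩ := hγ.exists_mem (halfEmb n z)
    obtain ⟨C, hC, hzC⟩ := hσ.exists_mem (halfEmb n z)
    rcases ueEmb_halfEmb_or_beEmb_halfEmb z with hz | hz
    · exact ⟨_, Or.inl ⟨B, hB, rfl⟩, hz ▸ mem_image_of_mem _ hzB⟩
    · exact ⟨_, Or.inr ⟨C, hC, rfl⟩, hz ▸ mem_image_of_mem _ hzC⟩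
  · rintro _ (⟨B, hB, rfl⟩ | ⟨C, hC, rfl⟩) _ (⟨B', hB', rfl⟩ | ⟨C', hC', rfl⟩) hne
    · rw [crosses_image_iff_of_strictMono ueEmb_strictMono]
      exact hγ.not_crosses hB hB' (ne_of_apply_ne _ hne)
    · exact (hmix B hB C' hC').1
    · exact (hmix B' hB' C hC).2
    · rw [crosses_image_iff_of_strictMono beEmb_strictMono]
      exact hσ.not_crosses hC hC' (ne_of_apply_ne _ hne)
  · rintro _ (⟨B, hB, rfl⟩ | ⟨C, hC, rfl⟩) _ (⟨B', hB', rfl⟩ | ⟨C', hC', rfl⟩) hne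
    · exact (disjoint_image ueEmb_strictMono.injective).2
        (hγ.2 B hB B' hB' (ne_of_apply_ne _ hne))
    · exact disjoint_image_ueEmb_beEmb B C'
    · exact (disjoint_image_ueEmb_beEmb B' C).symm
    · exact (disjoint_image beEmb_strictMono.injective).2
        (hσ.2 C hC C' hC' (ne_of_apply_ne _ hne))

theorem krRel_of_isNC_interleave (h : IsNC (2 * n) (interleave n γ σ)) {C : Finset (Fin n)}
    (hC : C ∈ σ) {i j : Fin n} (hi : i ∈ C) (hj : j ∈ C) : KrRel γ i j := by
  intro B hB x hx
  have hB' : B.image (ueEmb n) ∈ interleave n γ σ := mem_union_left _ (mem_image_of_mem _ hB)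
  have hC' : C.image (beEmb n) ∈ interleave n γ σ := mem_union_right _ (mem_image_of_mem _ hC)
  have hne : B.image (ueEmb n) ≠ C.image (beEmb n) := fun he =>
    disjoint_left.1 (disjoint_image_ueEmb_beEmb B C) (mem_image_of_mem _ hx)
      (he ▸ mem_image_of_mem _ hx)
  exact not_crosses_ueEmb_beEmb_iff.1 ⟨h.not_crosses hB' hC' hne, h.not_crosses hC' hB' hne.symm⟩
    i hi j hj x hx

theorem isNC_interleave_kr (hγ : IsNC n γ) : IsNC (2 * n) (interleave n γ (kr γ)) :=
  isNC_interleave hγ isNC_kr fun C hC _ hi _ hj =>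
    (linked_classes_iff (krRel_equivalence γ)).1 ⟨C, hC, hi, hj⟩

theorem refines_kr (hτ : IsNC n τ) (h : IsNC (2 * n) (interleave n γ τ)) :
    Refines n τ (kr γ) := by
  refine refines_of_isSaturated hτ.exists_mem fun C hC => ?_
  obtain ⟨c, rfl⟩ := mem_classes.1 hC
  intro T hT x hx y hy hcx
  simp only [coe_filter, mem_univ, true_and, Set.mem_ofPred_eq] at hcx ⊢
  exact (krRel_equivalence γ).trans hcx (krRel_of_isNC_interleave h hT hx hy)

theorem isKr_kr (hγ : IsNC n γ) : IsKr n γ (kr γ) :=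
  ⟨isNC_kr, isNC_interleave_kr hγ, fun _ hτ h => refines_kr hτ h⟩

theorem IsKr.eq_kr {γ' : Finset (Finset (Fin n))} (h : IsKr n γ γ') (hγ : IsNC n γ) :
    γ' = kr γ :=
  refines_antisymm h.1 isNC_kr (refines_kr h.1 h.2.1) (h.2.2 _ isNC_kr (isNC_interleave_kr hγ))

theorem Linked.mem_Ico_of_krRel {i j x y : Fin n} (h : Linked γ i j) (hxy : KrRel γ x y)
    (hx : x ∈ Set.Ico i j) : y ∈ Set.Ico i j := by
  obtain ⟨B, hB, hi, hj⟩ := h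
  have h₁ := hxy B hB i hi j hj
  have h₂ := hxy B hB j hj i hi
  simp only [Set.mem_uIoc, Set.mem_Ico] at *
  omega

theorem IsNC.krRel_of_gap (hγ : IsNC n γ) {B : Finset (Fin n)} (hB : B ∈ γ) {p j k : Fin n}
    (hp : p ∈ B) (hj : j ∈ B) (hpj : p < j) (hgap : ∀ x ∈ B, x ≤ p ∨ j ≤ x)
    (hk : k.val + 1 = j) : KrRel γ p k := by
  have hIoo : Set.uIoc p k = Set.Ioo p j := by
    ext x
    simp only [Set.mem_uIoc, Set.mem_Ioo, Fin.le_def, Fin.lt_def]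
    omega
  rw [KrRel, hIoo]
  exact hγ.isSaturated_Ioo hB hp hj hgap

theorem IsNC.krRel_max'_of_forall_le (hγ : IsNC n γ) {B : Finset (Fin n)} (hB : B ∈ γ)
    {j k : Fin n} (hj : j ∈ B) (hmin : ∀ x ∈ B, j ≤ x) (hk : k.val + 1 = j) :
    KrRel γ k (B.max' ⟨j, hj⟩) := by
  have hIcc : Set.uIoc k (B.max' ⟨j, hj⟩) = Set.Icc j (B.max' ⟨j, hj⟩) := by
    have hjm := Fin.le_def.1 (le_max' B j hj)
    ext x
    simp only [Set.mem_uIoc, Set.mem_Icc, Fin.le_def, Fin.lt_def]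
    omega
  rw [KrRel, hIcc]
  exact hγ.isSaturated_Icc hB hj (max'_mem _ _) fun x hx => ⟨hmin x hx, le_max' B x hx⟩

theorem IsNC.linked_of_forall_krRel (hγ : IsNC n γ) {i j : Fin n} (hij : i < j)
    (h : ∀ x y, KrRel γ x y → x ∈ Set.Ico i j → y ∈ Set.Ico i j) : Linked γ i j := by
  induction j using WellFoundedLT.induction with
  | _ j ih =>
  set k : Fin n := ⟨j - 1, by omega⟩
  have hkj : k.val + 1 = j := by simp only [k]; omega
  have hk : k ∈ Set.Ico i j := by simp only [Set.mem_Ico, Fin.le_def, Fin.lt_def, k]; omega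
  obtain ⟨B, hB, hjB⟩ := hγ.exists_mem j
  by_cases hbelow : ∃ p ∈ B, p < j
  · have hne : (B.filter (· < j)).Nonempty := by simpa [Finset.Nonempty] using hbelow
    set p := (B.filter (· < j)).max' hne
    obtain ⟨hpB, hpj⟩ := mem_filter.1 ((B.filter (· < j)).max'_mem hne)
    have hgap : ∀ x ∈ B, x ≤ p ∨ j ≤ x := fun x hx =>
      (lt_or_ge x j).imp (fun hxj => le_max' _ x (mem_filter.2 ⟨hx, hxj⟩)) id
    have hpk := hγ.krRel_of_gap hB hpB hjB hpj hgap hkj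
    have hip : i ≤ p := (h k p ((krRel_equivalence γ).symm hpk) hk).1
    rcases hip.eq_or_lt with rfl | hip
    · exact ⟨B, hB, hpB, hjB⟩
    · -- `[i, p)` is `[i, j)` minus `[p, j)`, and both are unions of Kreweras classes
      have hip_linked : Linked γ i p := ih p hpj hip fun x y hxy hx => by
        have hy := h x y hxy ⟨hx.1, hx.2.trans hpj⟩
        refine ⟨hy.1, lt_of_not_ge fun hpy => ?_⟩
        have := Linked.mem_Ico_of_krRel ⟨B, hB, hpB, hjB⟩ ((krRel_equivalence γ).symm hxy)
          ⟨hpy, hy.2⟩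
        exact this.1.not_gt hx.2
      exact ⟨B, hB, (hγ.linked_iff hB hpB).1 hip_linked.symm, hjB⟩
  · simp only [not_exists, not_and, not_lt] at hbelow
    have hkm := hγ.krRel_max'_of_forall_le hB hjB hbelow hkj
    exact absurd (h k _ hkm hk).2 (le_max' B j hjB).not_gt

theorem IsNC.linked_iff_krRel (hγ : IsNC n γ) {i j : Fin n} (hij : i < j) :
    Linked γ i j ↔ ∀ x y, KrRel γ x y → x ∈ Set.Ico i j → y ∈ Set.Ico i j :=
  ⟨fun h _ _ => h.mem_Ico_of_krRel, hγ.linked_of_forall_krRel hij⟩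

theorem kr_injOn : Set.InjOn kr {γ : Finset (Finset (Fin n)) | IsNC n γ} := by
  intro γ₁ h₁ γ₂ h₂ he
  have hrel : KrRel γ₁ = KrRel γ₂ := by
    ext x y
    rw [← linked_classes_iff (krRel_equivalence γ₁), ← linked_classes_iff (krRel_equivalence γ₂)]
    change Linked (kr γ₁) x y ↔ Linked (kr γ₂) x y
    rw [he]
  refine IsNC.ext_of_linked h₁ h₂ fun i j hij => ?_
  rw [IsNC.linked_iff_krRel h₁ hij, IsNC.linked_iff_krRel h₂ hij, hrel]

theorem kr_bijOn : Set.BijOn kr {γ : Finset (Finset (Fin n)) | IsNC n γ} {γ | IsNC n γ} :=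
  ((Set.toFinite {γ : Finset (Finset (Fin n)) | IsNC n γ}).injOn_iff_bijOn_of_mapsTo
    fun _ _ => isNC_kr).1 kr_injOn

/-- The Kreweras complement `Kr : NC(n) → NC(n)` is a well-defined bijection: every
`γ ∈ NC(n)` has a unique Kreweras complement, distinct elements have distinct
complements, and every element of `NC(n)` is a Kreweras complement. -/
theorem kreweras_bijective (n : ℕ) :
    (∀ γ : Finset (Finset (Fin n)), IsNC n γ → ∃! γ', IsKr n γ γ') ∧
    (∀ γ₁ γ₂ γ' : Finset (Finset (Fin n)), IsNC n γ₁ → IsNC n γ₂ →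
      IsKr n γ₁ γ' → IsKr n γ₂ γ' → γ₁ = γ₂) ∧
    (∀ γ' : Finset (Finset (Fin n)), IsNC n γ' → ∃ γ, IsNC n γ ∧ IsKr n γ γ') := by
  refine ⟨fun γ hγ => ⟨kr γ, isKr_kr hγ, fun γ' h => h.eq_kr hγ⟩,
    fun γ₁ γ₂ γ' h₁ h₂ k₁ k₂ => kr_bijOn.injOn h₁ h₂ ((k₁.eq_kr h₁).symm.trans (k₂.eq_kr h₂)),
    fun γ' hγ' => ?_⟩
  obtain ⟨γ, hγ, rfl⟩ := kr_bijOn.surjOn hγ'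
  exact ⟨γ, hγ, isKr_kr hγ⟩
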